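/- arXiv:1901.04409 — 2 statements merged into one kernel-verified Lean document; each statement's English description precedes it below -/
import Mathlib

section
/- Let C_d denote the full-support baker's map of 𝔠ⁿ moving the first letter of coordinate 1 to the front of coordinate d (2 ≤ d ≤ n). Then C_d = ⟨01₁, 10₁⟩ ∘ B_d(0₁) ∘ B_d(1₁), where B_d(x₁) is the baker's map supported on Γ(x₁) and ⟨01₁, 10₁⟩ is the transposition exchanging Γ(01,ε,…,ε) and Γ(10,ε,…,ε). -/
/-!
Coordinate `1` of the paper is `0 : Fin n`. The transposition `⟨01₁, 10₁⟩` simply exchanges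
the first two letters of coordinate `1`: on `Γ(00₁)` and `Γ(11₁)`, which it fixes, that
exchange is trivial. The baker's maps `B_d(0₁)` and `B_d(1₁)` keep the first letter of
coordinate `1`, so their supports are disjoint and stable, and their composite moves the
*second* letter of coordinate `1` to the front of coordinate `d`. Hence, after the exchange,
it moves the original first letter, which is what `C_d` does.
-/

open scoped Classical

/-- Finite words over the alphabet `{0,1}`. -/
abbrev Word := List Bool
/-- Cantor space: infinite `{0,1}`-sequences. -/
abbrev Cantor := ℕ → Bool

/-- Concatenate a finite word with an infinite sequence. -/
def catW (α : Word) (w : Cantor) : Cantor :=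
  fun i => if h : i < α.length then α.get ⟨i, h⟩ else w (i - α.length)

/-- The basic open set of sequences having `α` as a prefix. -/
def GammaW (α : Word) : Set Cantor := Set.range (catW α)

/-- Incomparability of words: neither is a prefix of the other. -/
def IncompW (α β : Word) : Prop := ¬ α <+: β ∧ ¬ β <+: α

/-- Addresses: `n`-tuples of finite words. -/
abbrev Addr (n : ℕ) := Fin n → Word
/-- `n`-dimensional Cantor space. -/
abbrev CantorN (n : ℕ) := Fin n → Cantor

/-- The basic open set in `𝔠ⁿ` indexed by the address `α`. -/
def GammaN {n : ℕ} (α : Addr n) : Set (CantorN n) :=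
  { w | ∀ d, w d ∈ GammaW (α d) }

/-- Incomparability of addresses: some coordinate pair is incomparable. -/
def IncompA {n : ℕ} (α β : Addr n) : Prop := ∃ d, IncompW (α d) (β d)

/-- Drop the first `k` symbols of an infinite sequence. -/
def dropSeq (k : ℕ) (w : Cantor) : Cantor := fun i => w (i + k)

/-- Prepend the address `α` coordinatewise. -/
def catA {n : ℕ} (α : Addr n) (u : CantorN n) : CantorN n :=
  fun d => catW (α d) (u d)

/-- Remove the prefix `α` coordinatewise. -/
def dropA {n : ℕ} (α : Addr n) (w : CantorN n) : CantorN n :=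
  fun d => dropSeq ((α d).length) (w d)

/-- The transposition `⟨α β⟩` of `𝔠ⁿ`: exchanges `Γ(α)` and `Γ(β)` by prefix
substitution and fixes all other points. -/
noncomputable def swapN {n : ℕ} (α β : Addr n) : CantorN n → CantorN n :=
  fun w =>
    if w ∈ GammaN α then catA β (dropA α w)
    else if w ∈ GammaN β then catA α (dropA β w)
    else w

/-- Append the symbol `x` to the `d`-th coordinate of the address `α`. -/
def appA {n : ℕ} (α : Addr n) (d : Fin n) (x : Bool) : Addr n :=
  Function.update α d (α d ++ [x])

/-- Append the word `u` to the `d`-th coordinate of the address `α`. -/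
def appW {n : ℕ} (α : Addr n) (d : Fin n) (u : Word) : Addr n :=
  Function.update α d (α d ++ u)

/-- Coordinatewise concatenation of addresses. -/
def concatA {n : ℕ} (α η : Addr n) : Addr n := fun d => α d ++ η d

/-- The address with word `u` in coordinate `d` and empty words elsewhere. -/
def unitA {n : ℕ} (d : Fin n) (u : Word) : Addr n :=
  fun e => if e = d then u else []

/-- Prepend a letter to an infinite sequence. -/
def consSeq (b : Bool) (w : Cantor) : Cantor :=
  fun i => match i with
  | 0 => b
  | i + 1 => w i

/-- The full-support baker's map: moves the first letter of coordinate `1`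
to the front of coordinate `d`. -/
def bakerFull {n : ℕ} [NeZero n] (d : Fin n) : CantorN n → CantorN n :=
  fun w e =>
    if e = 0 then dropSeq 1 (w 0)
    else if e = d then consSeq (w 0 0) (w d)
    else w e

/-- The inverse of the full-support baker's map: moves the first letter of
coordinate `d` to the front of coordinate `1`. -/
def invBakerFull {n : ℕ} [NeZero n] (d : Fin n) : CantorN n → CantorN n :=
  fun w e =>
    if e = 0 then consSeq (w d 0) (w 0)
    else if e = d then dropSeq 1 (w d)
    else w e

/-- The index-`d` baker's map with support `Γ(α)`: sends `α.x₁.u ↦ α.x_d.u`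
and fixes all points outside `Γ(α)`. -/
noncomputable def bakerN {n : ℕ} [NeZero n] (d : Fin n) (α : Addr n) :
    CantorN n → CantorN n :=
  fun w => if w ∈ GammaN α then catA α (bakerFull d (dropA α w)) else w

/-- The inverse of the index-`d` baker's map with support `Γ(α)`. -/
noncomputable def invBakerN {n : ℕ} [NeZero n] (d : Fin n) (α : Addr n) :
    CantorN n → CantorN n :=
  fun w => if w ∈ GammaN α then catA α (invBakerFull d (dropA α w)) else w

/-- The partial prefix-substitution action of the symbol `⟨γ δ⟩` on addresses,
as a relation: `ActRel γ δ ζ ζ'` holds iff `ζ • ⟨γ δ⟩` is defined and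
equals `ζ'`. -/
def ActRel {n : ℕ} (γ δ ζ ζ' : Addr n) : Prop :=
  (∃ η, ζ = concatA γ η ∧ ζ' = concatA δ η) ∨
  (∃ η, ζ = concatA δ η ∧ ζ' = concatA γ η) ∨
  (IncompA ζ γ ∧ IncompA ζ δ ∧ ζ' = ζ)

@[simp] lemma dropSeq_apply (k : ℕ) (w : Cantor) (i : ℕ) : dropSeq k w i = w (i + k) := rfl

@[simp] lemma consSeq_zero (b : Bool) (w : Cantor) : consSeq b w 0 = b := rfl

@[simp] lemma dropSeq_one_consSeq (b : Bool) (w : Cantor) : dropSeq 1 (consSeq b w) = w := rfl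

lemma consSeq_head_dropSeq_one (w : Cantor) : consSeq (w 0) (dropSeq 1 w) = w := by
  funext i; cases i <;> rfl

@[simp] lemma consSeq_one_dropSeq_two (w : Cantor) : consSeq (w 1) (dropSeq 2 w) = dropSeq 1 w := by
  funext i; cases i <;> rfl

@[simp] lemma dropSeq_dropSeq (k m : ℕ) (w : Cantor) :
    dropSeq k (dropSeq m w) = dropSeq (k + m) w := by
  funext i; simp [Nat.add_assoc]

@[simp] lemma dropSeq_zero (w : Cantor) : dropSeq 0 w = w := rfl

@[simp] lemma catW_nil (w : Cantor) : catW [] w = w := by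
  funext i; simp [catW]

@[simp] lemma catW_cons (b : Bool) (α : Word) (w : Cantor) :
    catW (b :: α) w = consSeq b (catW α w) := by
  funext i
  cases i with
  | zero => simp [catW]
  | succ i =>
    simp only [catW, List.length_cons, consSeq, Nat.add_lt_add_iff_right]
    split_ifs <;> simp

@[simp] lemma mem_GammaW_nil (w : Cantor) : w ∈ GammaW [] :=
  ⟨w, catW_nil w⟩

@[simp] lemma mem_GammaW_cons (b : Bool) (α : Word) (w : Cantor) :
    w ∈ GammaW (b :: α) ↔ w 0 = b ∧ dropSeq 1 w ∈ GammaW α := by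
  constructor
  · rintro ⟨u, rfl⟩
    exact ⟨by simp, u, by simp⟩
  · rintro ⟨rfl, u, hu⟩
    exact ⟨u, by rw [catW_cons, hu, consSeq_head_dropSeq_one]⟩

@[simp] lemma mem_GammaN_unitA {n : ℕ} (d : Fin n) (u : Word) (w : CantorN n) :
    w ∈ GammaN (unitA d u) ↔ w d ∈ GammaW u := by
  refine ⟨fun h => by simpa [unitA] using h d, fun h e => ?_⟩
  by_cases he : e = d
  · subst he; simpa [unitA] using h
  · simp [unitA, he]

lemma catA_unitA {n : ℕ} (d : Fin n) (u : Word) (v : CantorN n) :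
    catA (unitA d u) v = Function.update v d (catW u (v d)) := by
  funext e
  by_cases he : e = d
  · subst he; simp [catA, unitA]
  · simp [catA, unitA, he]

lemma dropA_unitA {n : ℕ} (d : Fin n) (u : Word) (w : CantorN n) :
    dropA (unitA d u) w = Function.update w d (dropSeq u.length (w d)) := by
  funext e
  by_cases he : e = d
  · subst he; simp [dropA, unitA]
  · simp [dropA, unitA, he]

lemma bakerN_of_mem {n : ℕ} [NeZero n] (d : Fin n) {α : Addr n} {w : CantorN n}
    (hw : w ∈ GammaN α) : bakerN d α w = catA α (bakerFull d (dropA α w)) :=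
  if_pos hw

lemma bakerN_of_not_mem {n : ℕ} [NeZero n] (d : Fin n) {α : Addr n} {w : CantorN n}
    (hw : w ∉ GammaN α) : bakerN d α w = w :=
  if_neg hw

def swapFirstTwo (w : Cantor) : Cantor := consSeq (w 1) (consSeq (w 0) (dropSeq 2 w))

@[simp] lemma swapFirstTwo_zero (w : Cantor) : swapFirstTwo w 0 = w 1 := rfl

@[simp] lemma swapFirstTwo_one (w : Cantor) : swapFirstTwo w 1 = w 0 := rfl

@[simp] lemma dropSeq_two_swapFirstTwo (w : Cantor) :
    dropSeq 2 (swapFirstTwo w) = dropSeq 2 w := rfl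

lemma swapFirstTwo_eq_self {w : Cantor} (h : w 0 = w 1) : swapFirstTwo w = w := by
  funext i
  rcases i with _ | _ | i
  · exact h.symm
  · exact h
  · rfl

lemma swapN_unitA_pair {n : ℕ} (e : Fin n) {a b : Bool} (hab : a ≠ b) (w : CantorN n) :
    swapN (unitA e [a, b]) (unitA e [b, a]) w = Function.update w e (swapFirstTwo (w e)) := by
  unfold swapN
  split_ifs with h₁ h₂ <;> simp only [mem_GammaN_unitA, mem_GammaW_cons, mem_GammaW_nil,
    dropSeq_apply, and_true] at *
  · simp [catA_unitA, dropA_unitA, swapFirstTwo, h₁.1, h₁.2]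
  · simp [catA_unitA, dropA_unitA, swapFirstTwo, h₂.1, h₂.2]
  · have h_eq : w e 0 = w e 1 := by cases a <;> cases b <;> cases h : w e 0 <;> simp_all
    rw [swapFirstTwo_eq_self h_eq, Function.update_eq_self]

lemma bakerN_true_bakerN_false {n : ℕ} [NeZero n] (d e : Fin n) (w : CantorN n) :
    bakerN d (unitA e [true]) (bakerN d (unitA e [false]) w) = bakerN d (unitA e [w e 0]) w := by
  cases h : w e 0
  · rw [bakerN_of_mem d (α := unitA e [false]) (by simp [h]),
      bakerN_of_not_mem d (by simp [catA_unitA])]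
  · rw [bakerN_of_not_mem d (α := unitA e [false]) (by simp [h])]

lemma bakerFull_eq_update {n : ℕ} [NeZero n] {d : Fin n} (hd : d ≠ 0) (w : CantorN n) :
    bakerFull d w =
      Function.update (Function.update w 0 (dropSeq 1 (w 0))) d (consSeq (w 0 0) (w d)) := by
  funext e
  by_cases he : e = d
  · subst he; simp [bakerFull, hd]
  · by_cases he0 : e = 0
    · subst he0; simp [bakerFull, Ne.symm hd]
    · simp [bakerFull, he, he0]

lemma bakerN_unitA_head {n : ℕ} [NeZero n] {d : Fin n} (hd : d ≠ 0) (w : CantorN n) :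
    bakerN d (unitA 0 [w 0 0]) w =
      Function.update (Function.update w 0 (consSeq (w 0 0) (dropSeq 2 (w 0)))) d
        (consSeq (w 0 1) (w d)) := by
  rw [bakerN_of_mem d (by simp), catA_unitA, dropA_unitA, bakerFull_eq_update hd]
  simp [Function.update_of_ne (Ne.symm hd), Function.update_comm hd, Function.update_of_ne hd]

theorem stmt14_general (n : ℕ) [NeZero n] (d : Fin n) (hd : d ≠ 0) :
    bakerFull d =
      bakerN d (unitA 0 [true]) ∘ bakerN d (unitA 0 [false]) ∘
        swapN (unitA 0 [false, true]) (unitA 0 [true, false]) := by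
  funext w
  rw [Function.comp_apply, Function.comp_apply, bakerN_true_bakerN_false,
    swapN_unitA_pair 0 Bool.false_ne_true, bakerN_unitA_head hd, bakerFull_eq_update hd]
  simp [Function.update_of_ne hd]

/-- The full-support baker's map factors as
`C_d = ⟨01₁, 10₁⟩ ; B_d(0₁) ; B_d(1₁)` (factors applied left to right). -/
theorem stmt14 (n : ℕ) [NeZero n] (hn : 2 ≤ n) (d : Fin n) (hd : d ≠ 0) :
    bakerFull d =
      bakerN d (unitA 0 [true]) ∘ bakerN d (unitA 0 [false]) ∘
        swapN (unitA 0 [false, true]) (unitA 0 [true, false]) :=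
  stmt14_general n d hd
end

section
/- Define homeomorphisms of 𝔠ⁿ: π̄_m as the transposition exchanging Γ(0^m 0,ε,…,ε) and Γ(0^m 1,ε,…,ε), and π_m as the transposition exchanging Γ(0^m 01,ε,…,ε) and Γ(0^m 1,ε,…,ε). Then π̄_m² = 1, π_m π̄_q = π̄_q π_m whenever q ≥ m+2, and π_m π̄_{m+1} π_m = π̄_{m+1} π_m π̄_{m+1} for all m ≥ 0. -/
open scoped Classical

section Aux

variable {n : ℕ}

/-! ### One-dimensional lemmas -/

lemma dropSeq_catW (a : Word) (v : Cantor) :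
    dropSeq a.length (catW a v) = v := by
  funext i
  simp only [dropSeq, catW]
  rw [dif_neg (by omega)]
  congr 1
  omega

lemma catW_dropSeq {a : Word} {w : Cantor} (h : w ∈ GammaW a) :
    catW a (dropSeq a.length w) = w := by
  obtain ⟨v, rfl⟩ := h
  rw [dropSeq_catW]

lemma catW_mem (a : Word) (v : Cantor) : catW a v ∈ GammaW a := ⟨v, rfl⟩

lemma prefix_of_mem_mem {a b : Word} {w : Cantor} (ha : w ∈ GammaW a)
    (hb : w ∈ GammaW b) (hl : a.length ≤ b.length) : a <+: b := by
  obtain ⟨u, hu⟩ := ha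
  obtain ⟨v, hv⟩ := hb
  rw [List.prefix_iff_eq_take]
  apply List.ext_getElem
  · rw [List.length_take]; omega
  · intro i hi hi'
    have h1 : w i = a[i] := by
      rw [← hu]; simp only [catW]; rw [dif_pos hi]; rfl
    have h2 : w i = b[i]'(by omega) := by
      rw [← hv]; simp only [catW]; rw [dif_pos (by omega)]; rfl
    rw [List.getElem_take]
    rw [← h1, h2]

lemma not_mem_of_incompW {a b : Word} {w : Cantor} (h : IncompW a b)
    (ha : w ∈ GammaW a) : w ∉ GammaW b := by
  intro hb
  rcases le_total a.length b.length with hl | hl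
  · exact h.1 (prefix_of_mem_mem ha hb hl)
  · exact h.2 (prefix_of_mem_mem hb ha hl)

lemma incompW_of_getElem {a b : Word} (i : ℕ) (ha : i < a.length)
    (hb : i < b.length) (h : a[i] ≠ b[i]) : IncompW a b := by
  constructor
  · intro hp; exact h (hp.getElem ha)
  · intro hp; exact h ((hp.getElem hb)).symm

/-! ### Address-level lemmas -/

lemma catA_mem (α : Addr n) (u : CantorN n) : catA α u ∈ GammaN α :=
  fun d => catW_mem _ _

lemma dropA_catA (α : Addr n) (u : CantorN n) : dropA α (catA α u) = u := by
  funext d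
  show dropSeq (α d).length (catW (α d) (u d)) = u d
  exact dropSeq_catW (α d) (u d)

lemma catA_dropA {α : Addr n} {w : CantorN n} (h : w ∈ GammaN α) :
    catA α (dropA α w) = w := by
  funext d
  show catW (α d) (dropSeq (α d).length (w d)) = w d
  exact catW_dropSeq (h d)

lemma IncompA.symm {α β : Addr n} (h : IncompA α β) : IncompA β α := by
  obtain ⟨d, h1, h2⟩ := h; exact ⟨d, h2, h1⟩

lemma not_mem_of_incompA {α β : Addr n} (h : IncompA α β) {w : CantorN n}
    (ha : w ∈ GammaN α) : w ∉ GammaN β := by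
  intro hb
  obtain ⟨d, hd⟩ := h
  exact not_mem_of_incompW hd (ha d) (hb d)

/-! ### Evaluating swaps -/

lemma swapN_cat_left {α β : Addr n} (u : CantorN n) :
    swapN α β (catA α u) = catA β u := by
  rw [swapN, if_pos (catA_mem α u), dropA_catA]

lemma swapN_cat_right {α β : Addr n} (h : IncompA α β) (u : CantorN n) :
    swapN α β (catA β u) = catA α u := by
  rw [swapN, if_neg (not_mem_of_incompA h.symm (catA_mem β u)),
    if_pos (catA_mem β u), dropA_catA]

lemma swapN_fix {α β : Addr n} {w : CantorN n} (hα : w ∉ GammaN α)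
    (hβ : w ∉ GammaN β) : swapN α β w = w := by
  rw [swapN, if_neg hα, if_neg hβ]

/-! ### Group identities -/

lemma swapN_invol {α β : Addr n} (h : IncompA α β) (w : CantorN n) :
    swapN α β (swapN α β w) = w := by
  by_cases hα : w ∈ GammaN α
  · rw [← catA_dropA hα, swapN_cat_left, swapN_cat_right h]
  · by_cases hβ : w ∈ GammaN β
    · rw [← catA_dropA hβ, swapN_cat_right h, swapN_cat_left]
    · rw [swapN_fix hα hβ, swapN_fix hα hβ]

lemma swapN_commute {a b c d : Addr n} (hab : IncompA a b) (hcd : IncompA c d)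
    (hac : IncompA a c) (had : IncompA a d) (hbc : IncompA b c)
    (hbd : IncompA b d) (w : CantorN n) :
    swapN a b (swapN c d w) = swapN c d (swapN a b w) := by
  by_cases hA : w ∈ GammaN a
  · rw [← catA_dropA hA, swapN_cat_left,
      swapN_fix (not_mem_of_incompA hac (catA_mem _ _))
        (not_mem_of_incompA had (catA_mem _ _)),
      swapN_fix (not_mem_of_incompA hbc (catA_mem _ _))
        (not_mem_of_incompA hbd (catA_mem _ _)), swapN_cat_left]
  · by_cases hB : w ∈ GammaN b
    · rw [← catA_dropA hB, swapN_cat_right hab,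
        swapN_fix (not_mem_of_incompA hbc (catA_mem _ _))
          (not_mem_of_incompA hbd (catA_mem _ _)),
        swapN_fix (not_mem_of_incompA hac (catA_mem _ _))
          (not_mem_of_incompA had (catA_mem _ _)), swapN_cat_right hab]
    · by_cases hC : w ∈ GammaN c
      · rw [← catA_dropA hC, swapN_cat_left,
          swapN_fix (not_mem_of_incompA hac.symm (catA_mem _ _))
            (not_mem_of_incompA hbc.symm (catA_mem _ _)),
          swapN_fix (not_mem_of_incompA had.symm (catA_mem _ _))
            (not_mem_of_incompA hbd.symm (catA_mem _ _)), swapN_cat_left]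
      · by_cases hD : w ∈ GammaN d
        · rw [← catA_dropA hD, swapN_cat_right hcd,
            swapN_fix (not_mem_of_incompA had.symm (catA_mem _ _))
              (not_mem_of_incompA hbd.symm (catA_mem _ _)),
            swapN_fix (not_mem_of_incompA hac.symm (catA_mem _ _))
              (not_mem_of_incompA hbc.symm (catA_mem _ _)),
            swapN_cat_right hcd]
        · rw [swapN_fix hC hD, swapN_fix hA hB, swapN_fix hC hD]

lemma swapN_braid {a b c : Addr n} (hab : IncompA a b) (hca : IncompA c a)
    (hcb : IncompA c b) (w : CantorN n) :
    swapN a b (swapN c a (swapN a b w)) =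
      swapN c a (swapN a b (swapN c a w)) := by
  by_cases hC : w ∈ GammaN c
  · rw [← catA_dropA hC,
      swapN_fix (not_mem_of_incompA hca (catA_mem _ _))
        (not_mem_of_incompA hcb (catA_mem _ _)),
      swapN_cat_left (α := c) (β := a),
      swapN_cat_left (α := a) (β := b),
      swapN_fix (not_mem_of_incompA hcb.symm (catA_mem _ _))
        (not_mem_of_incompA hab.symm (catA_mem _ _))]
  · by_cases hA : w ∈ GammaN a
    · rw [← catA_dropA hA, swapN_cat_left (α := a) (β := b),
        swapN_fix (not_mem_of_incompA hcb.symm (catA_mem _ _))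
          (not_mem_of_incompA hab.symm (catA_mem _ _)),
        swapN_cat_right hab, swapN_cat_right hca,
        swapN_fix (not_mem_of_incompA hca (catA_mem _ _))
          (not_mem_of_incompA hcb (catA_mem _ _)),
        swapN_cat_left (α := c) (β := a)]
    · by_cases hB : w ∈ GammaN b
      · rw [← catA_dropA hB, swapN_cat_right hab, swapN_cat_right hca,
          swapN_fix (not_mem_of_incompA hca (catA_mem _ _))
            (not_mem_of_incompA hcb (catA_mem _ _)),
          swapN_fix (not_mem_of_incompA hcb.symm (catA_mem _ _))
            (not_mem_of_incompA hab.symm (catA_mem _ _)),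
          swapN_cat_right hab, swapN_cat_right hca]
      · rw [swapN_fix hA hB, swapN_fix hC hA, swapN_fix hA hB,
          swapN_fix hC hA]

/-! ### Incomparability of the specific words -/

lemma unitA_zero {m : ℕ} [NeZero m] (u : Word) : unitA (0 : Fin m) u 0 = u := by
  simp [unitA]

lemma incompA_unit {m : ℕ} [NeZero m] {u v : Word} (h : IncompW u v) :
    IncompA (unitA (0 : Fin m) u) (unitA (0 : Fin m) v) := by
  refine ⟨0, ?_⟩
  rw [unitA_zero, unitA_zero]
  exact h

lemma getElem_rep_app {m : ℕ} (l : Word) (i : ℕ) (h : i < m) :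
    (List.replicate m false ++ l)[i]'(by simp; omega) = false := by
  rw [List.getElem_append_left (by simpa)]
  simp

lemma getElem_rep_app_right {m : ℕ} (l : Word) (i : ℕ) (h : i < l.length) :
    (List.replicate m false ++ l)[m + i]'(by simp; omega) = l[i] := by
  rw [List.getElem_append_right (by simp)]
  simp

end Aux

/-- With π̄_m = ⟨(0^m0,ε,…,ε) (0^m1,ε,…,ε)⟩ and
π_m = ⟨(0^m01,ε,…,ε) (0^m1,ε,…,ε)⟩ one has π̄_m² = 1, π_m and π̄_q commute for
q ≥ m + 2, and π_m π̄_{m+1} π_m = π̄_{m+1} π_m π̄_{m+1}. -/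
theorem stmt18 (n : ℕ) [NeZero n] (hn : 2 ≤ n)
    (π πbar : ℕ → CantorN n → CantorN n)
    (hπ : ∀ m, π m = swapN (unitA 0 (List.replicate m false ++ [false, true]))
                           (unitA 0 (List.replicate m false ++ [true])))
    (hπbar : ∀ m, πbar m =
        swapN (unitA 0 (List.replicate m false ++ [false]))
              (unitA 0 (List.replicate m false ++ [true]))) :
    (∀ m, πbar m ∘ πbar m = id) ∧
    (∀ m q, m + 2 ≤ q → π m ∘ πbar q = πbar q ∘ π m) ∧
    (∀ m, π m ∘ πbar (m + 1) ∘ π m = πbar (m + 1) ∘ π m ∘ πbar (m + 1)) := by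
  have key : ∀ m : ℕ,
      List.replicate (m + 1) false ++ [true] =
        List.replicate m false ++ [false, true] := by
    intro m
    rw [List.replicate_succ']
    simp
  -- incomparabilities
  have Iπ : ∀ m : ℕ, IncompW (List.replicate m false ++ [false, true])
      (List.replicate m false ++ [true]) := by
    intro m
    refine incompW_of_getElem m (by simp) (by simp) ?_
    have h1 := getElem_rep_app_right (m := m) [false, true] 0 (by simp)
    have h2 := getElem_rep_app_right (m := m) [true] 0 (by simp)
    simp only [Nat.add_zero] at h1 h2
    rw [h1, h2]; simp
  have Iπbar : ∀ m : ℕ, IncompW (List.replicate m false ++ [false])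
      (List.replicate m false ++ [true]) := by
    intro m
    refine incompW_of_getElem m (by simp) (by simp) ?_
    have h1 := getElem_rep_app_right (m := m) [false] 0 (by simp)
    have h2 := getElem_rep_app_right (m := m) [true] 0 (by simp)
    simp only [Nat.add_zero] at h1 h2
    rw [h1, h2]; simp
  -- π m vs π̄ q for q ≥ m+2 : all four cross pairs incomparable
  have Icross1 : ∀ m q : ℕ, m + 2 ≤ q → ∀ x : Bool,
      IncompW (List.replicate m false ++ [false, true])
        (List.replicate q false ++ [x]) := by
    intro m q hq x
    refine incompW_of_getElem (m + 1) (by simp) (by simp; omega) ?_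
    have h1 := getElem_rep_app_right (m := m) [false, true] 1 (by simp)
    have h2 := getElem_rep_app (m := q) [x] (m + 1) (by omega)
    rw [h1, h2]; simp
  have Icross2 : ∀ m q : ℕ, m + 2 ≤ q → ∀ x : Bool,
      IncompW (List.replicate m false ++ [true])
        (List.replicate q false ++ [x]) := by
    intro m q hq x
    refine incompW_of_getElem m (by simp) (by simp; omega) ?_
    have h1 := getElem_rep_app_right (m := m) [true] 0 (by simp)
    have h2 := getElem_rep_app (m := q) [x] m (by omega)
    simp only [Nat.add_zero] at h1
    rw [h1, h2]; simp
  -- c = 0^{m+1}0 vs a = 0^m01 and b = 0^m1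
  have Ica : ∀ m : ℕ, IncompW (List.replicate (m + 1) false ++ [false])
      (List.replicate m false ++ [false, true]) := by
    intro m
    refine incompW_of_getElem (m + 1) (by simp) (by simp) ?_
    have h1 := getElem_rep_app (m := m + 1) [false] (m + 1)
    have h2 := getElem_rep_app_right (m := m) [false, true] 1 (by simp)
    rw [List.getElem_append_right (by simp), h2]
    simp
  have Icb : ∀ m : ℕ, IncompW (List.replicate (m + 1) false ++ [false])
      (List.replicate m false ++ [true]) := by
    intro m
    refine incompW_of_getElem m (by simp) (by simp) ?_
    have h1 := getElem_rep_app (m := m + 1) [false] m (by omega)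
    have h2 := getElem_rep_app_right (m := m) [true] 0 (by simp)
    simp only [Nat.add_zero] at h2
    rw [h1, h2]; simp
  refine ⟨?_, ?_, ?_⟩
  · intro m
    funext w
    rw [hπbar m]
    exact swapN_invol (incompA_unit (Iπbar m)) w
  · intro m q hq
    funext w
    rw [hπ m, hπbar q]
    exact swapN_commute (incompA_unit (Iπ m)) (incompA_unit (Iπbar q))
      (incompA_unit (Icross1 m q hq false)) (incompA_unit (Icross1 m q hq true))
      (incompA_unit (Icross2 m q hq false)) (incompA_unit (Icross2 m q hq true)) w
  · intro m
    funext w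
    rw [hπ m, hπbar (m + 1), key m]
    exact swapN_braid (incompA_unit (Iπ m)) (incompA_unit (Ica m))
      (incompA_unit (Icb m)) w
end
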